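/- arXiv:1509.06408 — 3 statements merged into one kernel-verified Lean document; each statement's English description precedes it below -/
import Mathlib

section
/- Let H be a k-dimensional linear subspace of ℝ^{n+1} with orthonormal basis a^1,...,a^{n+1-k} of its orthogonal complement, and let S̃ = {x ∈ ℝ^{n+1} : Σ_j x_j = 1}. If H ∩ S̃ is nonempty, then the distance from the origin to H ∩ S̃ equals 1/√(n+1 − Σ_{l=1}^{n+1-k} (Σ_{j=1}^{n+1} a^l_j)²). -/
/-!
With `𝟙` the all-ones vector, the coordinate sum is `⟪x, 𝟙⟫`, and on `H` this equals `⟪x, p⟫`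
for `p` the orthogonal projection of `𝟙` onto `H`. By Cauchy–Schwarz every `x ∈ H` with
`⟪x, p⟫ = 1` has `‖x‖ ≥ ‖p‖⁻¹`, with equality at `x = p / ‖p‖²`. By Pythagoras,
`‖p‖² = ‖𝟙‖² - ‖P_{Hᗮ} 𝟙‖² = (n + 1) - ∑ₗ ⟪aˡ, 𝟙⟫²`, since the `aˡ` are an orthonormal basis of `Hᗮ`.
-/

open scoped RealInnerProductSpace
open Submodule Set

variable {E : Type*} [NormedAddCommGroup E] [InnerProductSpace ℝ E]

theorem Orthonormal.norm_sq_starProjection_eq_sum {ι : Type*} [Fintype ι] {a : ι → E}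
    (ha : Orthonormal ℝ a) {U : Submodule ℝ E} [U.HasOrthogonalProjection]
    (hU : span ℝ (range a) = U) (v : E) :
    ‖U.starProjection v‖ ^ 2 = ∑ i, ⟪a i, v⟫ ^ 2 := by
  subst hU
  have hb : Orthonormal ℝ (Module.Basis.span ha.linearIndependent) := by
    simpa only [← Module.Basis.span_apply ha.linearIndependent] using orthonormal_span ha
  let b := (Module.Basis.span ha.linearIndependent).toOrthonormalBasis hb
  rw [starProjection_apply, norm_coe, ← b.sum_sq_inner_right]
  simp [b]

theorem infDist_zero_setOf_mem_inner_eq_one (K : Submodule ℝ E) {p : E} (hpK : p ∈ K)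
    (hp : p ≠ 0) : Metric.infDist 0 {x | x ∈ K ∧ ⟪x, p⟫ = 1} = ‖p‖⁻¹ := by
  have hp_pos : 0 < ‖p‖ := norm_pos_iff.mpr hp
  have hmin : (‖p‖ ^ 2)⁻¹ • p ∈ {x | x ∈ K ∧ ⟪x, p⟫ = 1} := by
    refine ⟨K.smul_mem _ hpK, ?_⟩
    rw [real_inner_smul_left, real_inner_self_eq_norm_sq]
    field_simp
  apply le_antisymm
  · calc Metric.infDist 0 _ ≤ dist 0 ((‖p‖ ^ 2)⁻¹ • p) := Metric.infDist_le_dist_of_mem hmin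
      _ = ‖p‖⁻¹ := by
        rw [dist_zero_left, norm_smul, norm_inv, norm_pow, norm_norm]
        field_simp
  · refine (Metric.le_infDist ⟨_, hmin⟩).2 fun x ⟨_, hx⟩ => ?_
    have := hx ▸ real_inner_le_norm x p
    rw [dist_zero_left, inv_le_iff_one_le_mul₀ hp_pos]
    linarith

theorem infDist_zero_setOf_mem_inner_eq_one_eq_inv_norm_starProjection (K : Submodule ℝ E)
    [K.HasOrthogonalProjection] {v : E} (hne : {x | x ∈ K ∧ ⟪x, v⟫ = 1}.Nonempty) :
    Metric.infDist 0 {x | x ∈ K ∧ ⟪x, v⟫ = 1} = ‖K.starProjection v‖⁻¹ := by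
  have hset : {x | x ∈ K ∧ ⟪x, v⟫ = 1} = {x | x ∈ K ∧ ⟪x, K.starProjection v⟫ = 1} := by
    ext x
    refine and_congr_right fun hx => ?_
    rw [← inner_starProjection_left_eq_right, K.starProjection_eq_self_iff.2 hx]
  obtain ⟨x, hxK, hx⟩ := hset ▸ hne
  have hp : K.starProjection v ≠ 0 := by
    rintro hp
    simp [hp] at hx
  rw [hset, infDist_zero_setOf_mem_inner_eq_one K (K.starProjection_apply_mem v) hp]

namespace EuclideanSpace

variable {ι : Type*} [Fintype ι]

theorem inner_toLp_const_one (x : EuclideanSpace ℝ ι) :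
    ⟪x, WithLp.toLp 2 (fun _ => 1)⟫ = ∑ j, x j := by
  simp [PiLp.inner_apply]

theorem norm_sq_toLp_const_one :
    ‖(WithLp.toLp 2 (fun _ => 1) : EuclideanSpace ℝ ι)‖ ^ 2 = Fintype.card ι := by
  rw [← real_inner_self_eq_norm_sq, inner_toLp_const_one]
  simp

end EuclideanSpace

open MeasureTheory

theorem stmt1_general (n k : ℕ)
    (H : Submodule ℝ (EuclideanSpace ℝ (Fin (n + 1))))
    (a : Fin (n + 1 - k) → EuclideanSpace ℝ (Fin (n + 1)))
    (ha : Orthonormal ℝ a)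
    (hspan : Submodule.span ℝ (Set.range a) = Hᗮ)
    (hne : {x : EuclideanSpace ℝ (Fin (n + 1)) | x ∈ H ∧ ∑ j, x j = 1}.Nonempty) :
    Metric.infDist 0 {x : EuclideanSpace ℝ (Fin (n + 1)) | x ∈ H ∧ ∑ j, x j = 1} =
      1 / Real.sqrt ((n + 1) - ∑ l, (∑ j, a l j) ^ 2) := by
  set one : EuclideanSpace ℝ (Fin (n + 1)) := WithLp.toLp 2 (fun _ => 1)
  have hS : {x | x ∈ H ∧ ∑ j, x j = 1} = {x | x ∈ H ∧ ⟪x, one⟫ = 1} := by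
    simp only [one, EuclideanSpace.inner_toLp_const_one]
  rw [hS] at hne ⊢
  have hpyth := norm_sq_eq_add_norm_sq_starProjection one H
  rw [EuclideanSpace.norm_sq_toLp_const_one, ha.norm_sq_starProjection_eq_sum hspan] at hpyth
  simp only [one, EuclideanSpace.inner_toLp_const_one, Fintype.card_fin, Nat.cast_succ] at hpyth
  rw [infDist_zero_setOf_mem_inner_eq_one_eq_inv_norm_starProjection H hne, one_div,
    hpyth, add_sub_cancel_right, Real.sqrt_sq (norm_nonneg _)]

theorem stmt1 (n k : ℕ) (hk : k ≤ n + 1)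
    (H : Submodule ℝ (EuclideanSpace ℝ (Fin (n + 1))))
    (hH : Module.finrank ℝ H = k)
    (a : Fin (n + 1 - k) → EuclideanSpace ℝ (Fin (n + 1)))
    (ha : Orthonormal ℝ a)
    (haH : ∀ l, a l ∈ Hᗮ)
    (hspan : Submodule.span ℝ (Set.range a) = Hᗮ)
    (hne : {x : EuclideanSpace ℝ (Fin (n + 1)) | x ∈ H ∧ ∑ j, x j = 1}.Nonempty) :
    Metric.infDist 0 {x : EuclideanSpace ℝ (Fin (n + 1)) | x ∈ H ∧ ∑ j, x j = 1} =
      1 / Real.sqrt ((n + 1) - ∑ l, (∑ j, a l j) ^ 2) :=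
  stmt1_general n k H a ha hspan hne
end

section
/- Let H be a k-dimensional subspace of ℝ^{n+1} and S̄ = conv(S ∪ {0}) where S is the regular simplex {x ∈ ℝ^{n+1} : Σ x_j = 1, x_j ≥ 0}. Then the k-dimensional volume of H ∩ S̄ equals (1/k!) ∫_{H ∩ ℝ^{n+1}_{≥0}} exp(−Σ_{j=1}^{n+1} x_j) dx, where the integral is with respect to k-dimensional Lebesgue measure on H. -/
/-!
For a cone `C` and a linear form `ℓ ≥ 0` on it, `C ∩ {ℓ ≤ s} = s • (C ∩ {ℓ ≤ 1})`, so in dimension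
`k` its volume is `s ^ k * vol (C ∩ {ℓ ≤ 1})`. Writing `exp (-ℓ x) = ∫_{s ≥ ℓ x} exp (-s) ds` and
exchanging the integrals gives
`∫_C exp (-ℓ) = vol (C ∩ {ℓ ≤ 1}) * ∫_0^∞ s ^ k exp (-s) ds = k! * vol (C ∩ {ℓ ≤ 1})`.
Apply this inside `H`, whose own `k`-dimensional Hausdorff measure is a Haar measure pushing
forward to the ambient one restricted to `H`, with `C` the nonnegative orthant and `ℓ` the
coordinate sum: `conv (S ∪ {0})` is exactly the part of the orthant where `ℓ ≤ 1`.
-/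

open MeasureTheory Set Real Nat Pointwise Module

theorem convexHull_level_one_union_zero {E : Type*} [AddCommGroup E] [Module ℝ E]
    {C : Set E} (hC : Convex ℝ C) (hC0 : (0 : E) ∈ C)
    (hCsmul : ∀ r : ℝ, 0 < r → ∀ x ∈ C, r • x ∈ C) {ℓ : E →ₗ[ℝ] ℝ}
    (hℓ : ∀ x ∈ C, 0 ≤ ℓ x) (hℓ0 : ∀ x ∈ C, ℓ x = 0 → x = 0) :
    convexHull ℝ ({x | ℓ x = 1 ∧ x ∈ C} ∪ {0}) = C ∩ {x | ℓ x ≤ 1} := by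
  have hzero : (0 : E) ∈ convexHull ℝ ({x | ℓ x = 1 ∧ x ∈ C} ∪ {0}) :=
    subset_convexHull ℝ _ (Or.inr (mem_singleton 0))
  apply Subset.antisymm
  · refine convexHull_min ?_ (hC.inter (convex_halfSpace_le ℓ.isLinear 1))
    rintro x (⟨hx1, hxC⟩ | rfl)
    · exact ⟨hxC, hx1.le⟩
    · simpa using hC0
  · rintro x ⟨hxC, hx1 : ℓ x ≤ 1⟩
    rcases (hℓ x hxC).eq_or_lt with h0 | hpos
    · rwa [hℓ0 x hxC h0.symm]
    have hy : (ℓ x)⁻¹ • x ∈ {x | ℓ x = 1 ∧ x ∈ C} :=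
      ⟨by rw [map_smul, smul_eq_mul, inv_mul_cancel₀ hpos.ne'],
        hCsmul _ (inv_pos.mpr hpos) x hxC⟩
    have hseg : x ∈ segment ℝ (0 : E) ((ℓ x)⁻¹ • x) :=
      ⟨1 - ℓ x, ℓ x, by linarith, hpos.le, by ring, by
        rw [smul_zero, zero_add, smul_smul, mul_inv_cancel₀ hpos.ne', one_smul]⟩
    exact (convex_convexHull ℝ _).segment_subset hzero (subset_convexHull ℝ _ (Or.inl hy)) hseg

theorem inter_setOf_le_eq_smul {E : Type*} [AddCommGroup E] [Module ℝ E] {C : Set E}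
    (hC : ∀ r : ℝ, 0 < r → ∀ x ∈ C, r • x ∈ C) (ℓ : E →ₗ[ℝ] ℝ) {s : ℝ} (hs : 0 < s) :
    C ∩ {x | ℓ x ≤ s} = s • (C ∩ {x | ℓ x ≤ 1}) := by
  ext x
  rw [mem_smul_set_iff_inv_smul_mem₀ hs.ne']
  refine and_congr ⟨hC _ (inv_pos.mpr hs) x, fun h => ?_⟩ ?_
  · simpa [smul_smul, hs.ne'] using hC s hs _ h
  · simp only [mem_ofPred_eq, map_smul, smul_eq_mul]
    rw [inv_mul_le_iff₀ hs, mul_one]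

theorem lintegral_Ioi_indicator_Ici_exp_neg {a : ℝ} (ha : 0 ≤ a) :
    ∫⁻ s in Ioi (0 : ℝ), (Ici a).indicator (fun s => ENNReal.ofReal (exp (-s))) s
      = ENNReal.ofReal (exp (-a)) := by
  have hset : (Ici a ∩ Ioi 0 : Set ℝ) =ᵐ[volume] Ioi a := by
    refine ((ae_eq_refl _).inter Ioi_ae_eq_Ici).trans ?_
    rw [inter_eq_left.mpr (Ici_subset_Ici.mpr ha)]
    exact Ioi_ae_eq_Ici.symm
  rw [lintegral_indicator measurableSet_Ici, Measure.restrict_restrict measurableSet_Ici,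
    Measure.restrict_congr_set hset, ← integral_exp_neg_Ioi, ofReal_integral_eq_lintegral_ofReal
      (Integrable.of_integral_ne_zero (by rw [integral_exp_neg_Ioi]; positivity))
      (.of_forall fun s => (exp_pos _).le)]

theorem lintegral_exp_neg_mul_pow (k : ℕ) :
    ∫⁻ s in Ioi (0 : ℝ), ENNReal.ofReal (exp (-s) * s ^ k) = k ! := by
  have hΓ : ∫ s in Ioi (0 : ℝ), exp (-s) * s ^ k = k ! := by
    rw [← Gamma_nat_eq_factorial, Gamma_eq_integral (by positivity)]
    refine setIntegral_congr_fun measurableSet_Ioi fun s _ => ?_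
    simp [← rpow_natCast]
  rw [← ENNReal.ofReal_natCast, ← hΓ, ofReal_integral_eq_lintegral_ofReal
    (Integrable.of_integral_ne_zero (by rw [hΓ]; positivity))]
  filter_upwards [ae_restrict_mem measurableSet_Ioi] with s (hs : 0 < s)
  positivity

section Cone

variable {E : Type*} [NormedAddCommGroup E] [NormedSpace ℝ E] [FiniteDimensional ℝ E]
  [MeasurableSpace E] [BorelSpace E] (μ : Measure E) [μ.IsAddHaarMeasure]
  {C : Set E} {ℓ : E →L[ℝ] ℝ}

theorem addHaar_inter_setOf_le (hC : ∀ r : ℝ, 0 < r → ∀ x ∈ C, r • x ∈ C) {s : ℝ}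
    (hs : 0 < s) :
    μ (C ∩ {x | ℓ x ≤ s}) = ENNReal.ofReal (s ^ finrank ℝ E) * μ (C ∩ {x | ℓ x ≤ 1}) := by
  rw [show C ∩ {x | ℓ x ≤ s} = _ from inter_setOf_le_eq_smul hC ℓ hs, Measure.addHaar_smul,
    abs_of_nonneg (by positivity)]
  rfl

theorem lintegral_exp_neg_eq_factorial_mul (hCm : MeasurableSet C)
    (hC : ∀ r : ℝ, 0 < r → ∀ x ∈ C, r • x ∈ C) (hℓ : ∀ x ∈ C, 0 ≤ ℓ x) :
    ∫⁻ x in C, ENNReal.ofReal (exp (-ℓ x)) ∂μ = (finrank ℝ E)! * μ (C ∩ {x | ℓ x ≤ 1}) := by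
  set g : ℝ → ENNReal := fun s => ENNReal.ofReal (exp (-s))
  have hswap : ∀ x s, (Ici (ℓ x)).indicator g s = {y | ℓ y ≤ s}.indicator (fun _ => g s) x :=
    fun x s => by simp only [indicator, mem_Ici, mem_ofPred_eq]
  calc ∫⁻ x in C, ENNReal.ofReal (exp (-ℓ x)) ∂μ
      = ∫⁻ x in C, (∫⁻ s in Ioi (0 : ℝ), (Ici (ℓ x)).indicator g s) ∂μ :=
        setLIntegral_congr_fun hCm fun x hx =>
          (lintegral_Ioi_indicator_Ici_exp_neg (hℓ x hx)).symm
    _ = ∫⁻ s in Ioi (0 : ℝ), ∫⁻ x in C, {y | ℓ y ≤ s}.indicator (fun _ => g s) x ∂μ := by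
        simp_rw [hswap]
        exact lintegral_lintegral_swap ((Measurable.ennreal_ofReal (by fun_prop)).indicator
          (measurableSet_le (by fun_prop) measurable_snd)).aemeasurable
    _ = ∫⁻ s in Ioi (0 : ℝ),
          ENNReal.ofReal (exp (-s) * s ^ finrank ℝ E) * μ (C ∩ {x | ℓ x ≤ 1}) := by
        refine setLIntegral_congr_fun measurableSet_Ioi fun s (hs : 0 < s) => ?_
        have hm : MeasurableSet {y | ℓ y ≤ s} := measurableSet_le ℓ.measurable measurable_const
        rw [lintegral_indicator_const hm, Measure.restrict_apply hm, inter_comm,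
          addHaar_inter_setOf_le μ hC hs, ← mul_assoc, ← ENNReal.ofReal_mul (exp_pos _).le]
    _ = (finrank ℝ E)! * μ (C ∩ {x | ℓ x ≤ 1}) := by
        rw [lintegral_mul_const _ (by fun_prop), lintegral_exp_neg_mul_pow]

theorem measure_inter_setOf_le_one_eq_integral_exp_neg (hCm : MeasurableSet C)
    (hC : ∀ r : ℝ, 0 < r → ∀ x ∈ C, r • x ∈ C) (hℓ : ∀ x ∈ C, 0 ≤ ℓ x) :
    (μ (C ∩ {x | ℓ x ≤ 1})).toReal = 1 / (finrank ℝ E)! * ∫ x in C, exp (-ℓ x) ∂μ := by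
  rw [integral_eq_lintegral_of_nonneg_ae (.of_forall fun _ => (exp_pos _).le) (by fun_prop),
    lintegral_exp_neg_eq_factorial_mul μ hCm hC hℓ, ENNReal.toReal_mul, ENNReal.toReal_natCast]
  field_simp

end Cone

theorem hausdorffMeasure_submodule_inter_setOf_le_one_eq_integral_exp_neg {F : Type*}
    [NormedAddCommGroup F] [NormedSpace ℝ F] [MeasurableSpace F] [BorelSpace F]
    (H : Submodule ℝ F) [FiniteDimensional ℝ H] {C : Set F} (hCm : MeasurableSet C)
    (hC : ∀ r : ℝ, 0 < r → ∀ x ∈ C, r • x ∈ C) {ℓ : F →L[ℝ] ℝ} (hℓ : ∀ x ∈ C, 0 ≤ ℓ x) :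
    (μH[finrank ℝ H] ((H : Set F) ∩ (C ∩ {x | ℓ x ≤ 1}))).toReal
      = 1 / (finrank ℝ H)! * ∫ x in (H : Set F) ∩ C, exp (-ℓ x) ∂μH[finrank ℝ H] := by
  have hH : MeasurableSet (H : Set F) := H.closed_of_finiteDimensional.measurableSet
  have hval : Measurable ((↑) : H → F) := measurable_subtype_coe
  have hmap : Measure.map ((↑) : H → F) μH[finrank ℝ H]
      = (μH[finrank ℝ H] : Measure F).restrict H := by
    rw [isometry_subtype_coe.map_hausdorffMeasure (Or.inl (Nat.cast_nonneg _)),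
      Subtype.range_coe]
  rw [inter_comm, ← Measure.restrict_apply' hH, ← hmap,
    Measure.map_apply hval (hCm.inter (measurableSet_le (by fun_prop) measurable_const)),
    inter_comm (H : Set F), ← Measure.restrict_restrict hCm, ← hmap,
    setIntegral_map hCm (by fun_prop) hval.aemeasurable]
  exact measure_inter_setOf_le_one_eq_integral_exp_neg _ (hCm.preimage hval)
    (fun r hr x hx => hC r hr x hx) (fun x hx => hℓ x hx) (ℓ := ℓ.comp H.subtypeL)

section Orthant

variable {ι : Type*}

noncomputable def coordSum (ι : Type*) [Fintype ι] : EuclideanSpace ℝ ι →L[ℝ] ℝ :=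
  ∑ j, EuclideanSpace.proj j

@[simp]
theorem coordSum_apply [Fintype ι] (x : EuclideanSpace ℝ ι) : coordSum ι x = ∑ j, x j := by
  simp [coordSum]

def nonnegOrthant (ι : Type*) : Set (EuclideanSpace ℝ ι) := {x | ∀ j, 0 ≤ x j}

theorem mem_nonnegOrthant {x : EuclideanSpace ℝ ι} : x ∈ nonnegOrthant ι ↔ ∀ j, 0 ≤ x j :=
  Iff.rfl

theorem isClosed_nonnegOrthant : IsClosed (nonnegOrthant ι) := by
  simp only [nonnegOrthant, ofPred_forall]
  exact isClosed_iInter fun j => isClosed_le continuous_const (by fun_prop)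

theorem convex_nonnegOrthant : Convex ℝ (nonnegOrthant ι) := by
  intro x hx y hy a b ha hb _ j
  simp only [PiLp.add_apply, PiLp.smul_apply, smul_eq_mul]
  exact add_nonneg (mul_nonneg ha (hx j)) (mul_nonneg hb (hy j))

theorem smul_mem_nonnegOrthant {r : ℝ} (hr : 0 ≤ r) {x : EuclideanSpace ℝ ι}
    (hx : x ∈ nonnegOrthant ι) : r • x ∈ nonnegOrthant ι :=
  fun j => mul_nonneg hr (hx j)

theorem coordSum_nonneg [Fintype ι] {x : EuclideanSpace ℝ ι} (hx : x ∈ nonnegOrthant ι) :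
    0 ≤ coordSum ι x := by
  simpa using Finset.sum_nonneg fun j _ => hx j

theorem eq_zero_of_coordSum_eq_zero [Fintype ι] {x : EuclideanSpace ℝ ι}
    (hx : x ∈ nonnegOrthant ι) (h : coordSum ι x = 0) : x = 0 := by
  ext j
  rw [coordSum_apply, Finset.sum_eq_zero_iff_of_nonneg fun i _ => hx i] at h
  exact h j (Finset.mem_univ j)

end Orthant

theorem stmt2 (n k : ℕ)
    (H : Submodule ℝ (EuclideanSpace ℝ (Fin (n + 1))))
    (hH : Module.finrank ℝ H = k) :
    (μH[(k : ℝ)] ((H : Set (EuclideanSpace ℝ (Fin (n + 1)))) ∩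
        convexHull ℝ ({x : EuclideanSpace ℝ (Fin (n + 1)) |
          (∑ j, x j = 1) ∧ ∀ j, 0 ≤ x j} ∪ {0}))).toReal
      = (1 / (Nat.factorial k : ℝ)) *
        ∫ x in {x : EuclideanSpace ℝ (Fin (n + 1)) | x ∈ H ∧ ∀ j, 0 ≤ x j},
          Real.exp (-∑ j, x j) ∂μH[(k : ℝ)] := by
  subst hH
  have hsmul : ∀ r : ℝ, 0 < r → ∀ x ∈ nonnegOrthant (Fin (n + 1)), r • x ∈ nonnegOrthant _ :=
    fun r hr x hx => smul_mem_nonnegOrthant hr.le hx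
  have hhull := convexHull_level_one_union_zero convex_nonnegOrthant (fun j => le_rfl) hsmul
    (ℓ := (coordSum (Fin (n + 1)) : _ →ₗ[ℝ] ℝ)) (fun x hx => coordSum_nonneg hx)
    (fun x hx => eq_zero_of_coordSum_eq_zero hx)
  simp only [ContinuousLinearMap.coe_coe, coordSum_apply, mem_nonnegOrthant] at hhull
  rw [hhull]
  have h := hausdorffMeasure_submodule_inter_setOf_le_one_eq_integral_exp_neg H
    isClosed_nonnegOrthant.measurableSet hsmul (fun x hx => coordSum_nonneg hx)
  simp only [coordSum_apply] at h
  exact h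
end

section
/- Define for N = 5 and x ∈ [0,1]: V(x) = (√N/N!)·√(1/(Nx+1)² + 1/(N(1−x)+1)² + N·(x/(Nx+1) − (1−x)/(N(1−x)+1))²) · Σ_{m=0}^{N−1} (Nx/(Nx+1))^{N−1−m}·(N(1−x)/(N(1−x)+1))^m. Then V(1/2) > V(0); explicitly V(0) = (125/186624)·√5·√42 < (625/201684)·√10 = V(1/2). -/
noncomputable def V17 (x : ℝ) : ℝ :=
  (Real.sqrt 5 / 120) *
    Real.sqrt (1 / (5 * x + 1) ^ 2 + 1 / (5 * (1 - x) + 1) ^ 2 +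
      5 * (x / (5 * x + 1) - (1 - x) / (5 * (1 - x) + 1)) ^ 2) *
    ∑ m ∈ Finset.range 5,
      (5 * x / (5 * x + 1)) ^ (4 - m) * (5 * (1 - x) / (5 * (1 - x) + 1)) ^ m

/-!
At `x = 0` only the last term `(5/6)^4` of the sum survives and the radicand is `42/36`; at
`x = 1/2` all five terms equal `(5/7)^4` and the radicand is `8/49`. Squaring turns the comparison
of the two closed forms into an inequality between rationals.
-/

open Real

theorem V17_zero : V17 0 = 125 / 186624 * √5 * √42 := by
  have h42 : √42 = √6 * √7 := by rw [← sqrt_mul] <;> norm_num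
  have h6 : √6 ≠ 0 := by positivity
  norm_num [V17, Finset.sum_range_succ, h42]
  field_simp
  norm_num

theorem V17_one_half : V17 (1 / 2) = 625 / 201684 * √10 := by
  have h8 : √8 = 2 * √2 := by
    rw [show (8 : ℝ) = 2 ^ 2 * 2 by norm_num, sqrt_mul (by norm_num), sqrt_sq (by norm_num)]
  have h10 : √10 = √5 * √2 := by rw [← sqrt_mul] <;> norm_num
  norm_num [V17, Finset.sum_range_succ, h8, h10]
  ring

theorem stmt17 :
    V17 (1 / 2) > V17 0 ∧
    V17 0 = 125 / 186624 * Real.sqrt 5 * Real.sqrt 42 ∧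
    V17 (1 / 2) = 625 / 201684 * Real.sqrt 10 := by
  refine ⟨?_, V17_zero, V17_one_half⟩
  rw [V17_zero, V17_one_half, gt_iff_lt]
  refine lt_of_pow_lt_pow_left₀ 2 (by positivity) ?_
  norm_num [mul_pow]
end
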